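/- Let d and m₀ be two distinct positive probability vectors on a finite set T and let 0 ≤ c < K²(d, m₀). If a positive probability vector p* minimizes L²(d, p) over the set {p : p a positive probability vector, K²(p, m₀) ≤ c}, then K²(p*, m₀) = c; that is, every constrained minimizer lies on the boundary of the tube. -/

import Mathlib

/-!
If `K²(p*, m₀) < c`, slide `p*` towards `d`. Both `K²(·, m₀)` and `L²(d, ·) = K²(·, d)` are
convex, so at the point `(1 - ε) p* + ε d` with `ε = (c - K²(p*, m₀)) / (K²(d, m₀) - K²(p*, m₀))`
we still have `K² ≤ c`, while `L²` is at most `(1 - ε) L²(d, p*)`, which is strictly smaller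
than `L²(d, p*)` by Gibbs' inequality since `p* ≠ d`.
-/

open Finset

/-- A positive probability vector on `Fin N`. -/
def IsPPV {N : ℕ} (p : Fin N → ℝ) : Prop := (∀ t, 0 < p t) ∧ ∑ t, p t = 1

/-- Kullback–Leibler distance `K²(p, m) = ∑ m(t) log(m(t)/p(t))`. -/
noncomputable def Ksq {N : ℕ} (p m : Fin N → ℝ) : ℝ := ∑ t, m t * Real.log (m t / p t)

/-- Likelihood distance `L²(d, p) = ∑ d(t) log(d(t)/p(t))`. -/
noncomputable def Lsq {N : ℕ} (d p : Fin N → ℝ) : ℝ := ∑ t, d t * Real.log (d t / p t)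

open Real Set

namespace Real

lemma sub_lt_mul_log_div {x y : ℝ} (hx : 0 < x) (hy : 0 < y) (hxy : x ≠ y) :
    x - y < x * log (x / y) := by
  have hlog := log_lt_sub_one_of_pos (div_pos hy hx)
    fun h => hxy ((div_eq_one_iff_eq hx.ne').1 h).symm
  have hswap : log (x / y) = -log (y / x) := by rw [← log_inv, inv_div]
  calc x - y = x * (1 - y / x) := by field_simp
    _ < x * log (x / y) := mul_lt_mul_of_pos_left (by linarith) hx

lemma sub_le_mul_log_div {x y : ℝ} (hx : 0 < x) (hy : 0 < y) : x - y ≤ x * log (x / y) := by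
  rcases eq_or_ne x y with rfl | hxy
  · simp [div_self hx.ne']
  · exact (sub_lt_mul_log_div hx hy hxy).le

lemma convexOn_mul_log_div {w : ℝ} (hw : 0 ≤ w) :
    ConvexOn ℝ (Ioi 0) fun x => w * log (w / x) := by
  refine ((strictConcaveOn_log_Ioi.concaveOn.neg.smul hw).add_const (w * log w)).congr
    fun x hx => ?_
  rcases hw.eq_or_lt with rfl | hw
  · simp
  · simp only [Pi.add_apply, Pi.neg_apply, smul_eq_mul, log_div hw.ne' (ne_of_gt hx)]
    ring

end Real

variable {N : ℕ}

lemma Lsq_eq_Ksq (d p : Fin N → ℝ) : Lsq d p = Ksq p d := rfl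

lemma Ksq_self (m : Fin N → ℝ) : Ksq m m = 0 :=
  sum_eq_zero fun t _ => by rcases eq_or_ne (m t) 0 with h | h <;> simp [h]

lemma Ksq_pos {p m : Fin N → ℝ} (hp : IsPPV p) (hm : IsPPV m) (hne : p ≠ m) :
    0 < Ksq p m := by
  obtain ⟨t₀, ht₀⟩ := Function.ne_iff.1 hne
  calc 0 = ∑ t, (m t - p t) := by rw [sum_sub_distrib, hm.2, hp.2, sub_self]
    _ < Ksq p m := sum_lt_sum (fun t _ => sub_le_mul_log_div (hm.1 t) (hp.1 t))
      ⟨t₀, mem_univ _, sub_lt_mul_log_div (hm.1 t₀) (hp.1 t₀) (Ne.symm ht₀)⟩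

lemma IsPPV.mem_pi_Ioi {p : Fin N → ℝ} (hp : IsPPV p) : p ∈ Set.univ.pi fun _ => Ioi (0 : ℝ) :=
  fun t _ => hp.1 t

lemma convex_setOf_isPPV : Convex ℝ {p : Fin N → ℝ | IsPPV p} := by
  intro p hp q hq a b ha hb hab
  refine ⟨fun t => convex_Ioi (0 : ℝ) (hp.1 t) (hq.1 t) ha hb hab, ?_⟩
  simp [sum_add_distrib, ← mul_sum, hp.2, hq.2, hab]

lemma convexOn_Ksq {m : Fin N → ℝ} (hm : ∀ t, 0 ≤ m t) :
    ConvexOn ℝ (Set.univ.pi fun _ => Ioi (0 : ℝ)) fun p : Fin N → ℝ => Ksq p m := by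
  refine ⟨convex_pi fun _ _ => convex_Ioi 0, fun p hp q hq a b ha hb hab => ?_⟩
  simp only [Ksq, smul_eq_mul, mul_sum, ← sum_add_distrib]
  exact sum_le_sum fun t _ =>
    (convexOn_mul_log_div (hm t)).2 (hp t (mem_univ t)) (hq t (mem_univ t)) ha hb hab

theorem minimizer_on_boundary_general {N : ℕ}
    (d m₀ : Fin N → ℝ) (hd : IsPPV d) (hm : IsPPV m₀)
    (c : ℝ) (hc1 : c < Ksq d m₀)
    (pstar : Fin N → ℝ) (hpstar : IsPPV pstar) (hstarmem : Ksq pstar m₀ ≤ c)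
    (hmin : ∀ p : Fin N → ℝ, IsPPV p → Ksq p m₀ ≤ c → Lsq d pstar ≤ Lsq d p) :
    Ksq pstar m₀ = c := by
  by_contra hbd
  have hlt : Ksq pstar m₀ < c := lt_of_le_of_ne hstarmem hbd
  have hpd : pstar ≠ d := by rintro rfl; linarith
  set ε := (c - Ksq pstar m₀) / (Ksq d m₀ - Ksq pstar m₀)
  have hε0 : 0 < ε := div_pos (by linarith) (by linarith)
  have hε1 : ε < 1 := (div_lt_one (by linarith)).2 (by linarith)
  set p := (1 - ε) • pstar + ε • d
  have hp : IsPPV p := convex_setOf_isPPV hpstar hd (by linarith) hε0.le (by ring)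
  have hpK : Ksq p m₀ ≤ c := calc
    Ksq p m₀ ≤ (1 - ε) * Ksq pstar m₀ + ε * Ksq d m₀ :=
      (convexOn_Ksq fun t => (hm.1 t).le).2 hpstar.mem_pi_Ioi hd.mem_pi_Ioi
        (by linarith) hε0.le (by ring)
    _ = c := by
      have hεK : ε * (Ksq d m₀ - Ksq pstar m₀) = c - Ksq pstar m₀ :=
        div_mul_cancel₀ _ (by linarith)
      linear_combination hεK
  have hpL : Ksq p d < Ksq pstar d := calc
    Ksq p d ≤ (1 - ε) * Ksq pstar d + ε * Ksq d d :=
      (convexOn_Ksq fun t => (hd.1 t).le).2 hpstar.mem_pi_Ioi hd.mem_pi_Ioi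
        (by linarith) hε0.le (by ring)
    _ < Ksq pstar d := by nlinarith [Ksq_self d, Ksq_pos hpstar hd hpd]
  simp only [Lsq_eq_Ksq] at hmin
  exact (hmin p hp hpK).not_gt hpL

/-- Every constrained minimizer of `L²(d, ·)` over the tube `{p : K²(p, m₀) ≤ c}`
with `0 ≤ c < K²(d, m₀)` lies on the boundary of the tube. -/
theorem minimizer_on_boundary {N : ℕ} (hN : 1 ≤ N)
    (d m₀ : Fin N → ℝ) (hd : IsPPV d) (hm : IsPPV m₀) (hne : d ≠ m₀)
    (c : ℝ) (hc0 : 0 ≤ c) (hc1 : c < Ksq d m₀)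
    (pstar : Fin N → ℝ) (hpstar : IsPPV pstar) (hstarmem : Ksq pstar m₀ ≤ c)
    (hmin : ∀ p : Fin N → ℝ, IsPPV p → Ksq p m₀ ≤ c → Lsq d pstar ≤ Lsq d p) :
    Ksq pstar m₀ = c :=
  minimizer_on_boundary_general d m₀ hd hm c hc1 pstar hpstar hstarmem hmin
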